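/- Let F be a field, N a natural number, V an (N+1)-dimensional vector space over F, and B a Billiard Array on V. Let 0 ≤ n ≤ N and let μ be a triple of natural numbers with coordinate sum N − n. Define B_μ = ∑ B_λ, the sum over all λ ∈ Δ_N with μ ≤ λ componentwise. Then for each ξ ∈ {1,2,3}, B_μ equals the sum of the subspaces B_{μ+ν} over the elements ν of Δ_n with ξ-coordinate 0, this sum is direct, and B_μ has dimension n + 1. -/

import Mathlib

/-- `Δ_N`: the set of triples of natural numbers with sum `N`. -/
def BA.Delta (N : ℕ) : Set (Fin 3 → ℕ) := {v | v 0 + v 1 + v 2 = N}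

/-- A line in `Δ_N`: the set of locations with a given `η`-coordinate `c`. -/
def BA.IsLine (N : ℕ) (L : Set (Fin 3 → ℕ)) : Prop :=
  ∃ (η : Fin 3) (c : ℕ), c ≤ N ∧ L = {v ∈ BA.Delta N | v η = c}

/-- The black 3-clique attached to `(r,s,t)`. -/
def BA.blackSet (r s t : ℕ) : Set (Fin 3 → ℕ) :=
  {![r + 1, s, t], ![r, s + 1, t], ![r, s, t + 1]}

/-- A Billiard Array on `V`: a function assigning to each location of `Δ_N` a
one-dimensional subspace of `V`, such that the sum over each line is direct and
the sum over each black 3-clique is not direct. -/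
def BA.IsBilliardArray {F V : Type*} [Field F] [AddCommGroup V] [Module F V]
    (N : ℕ) (B : (Fin 3 → ℕ) → Submodule F V) : Prop :=
  (∀ v ∈ BA.Delta N, Module.finrank F (B v) = 1) ∧
  (∀ L : Set (Fin 3 → ℕ), BA.IsLine N L → iSupIndep fun x : L => B x.1) ∧
  (∀ r s t : ℕ, r + s + t + 1 = N → ¬ iSupIndep fun x : BA.blackSet r s t => B x.1)

/-!
The three lines of a black 3-clique are pairwise distinct (any two of them lie on a common line
of `Δ_N`) but not independent, so they span a plane spanned by any two of them. Hence, for a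
location `μ + ν` with `ν ξ > 0`, the clique below it puts `B_{μ+ν}` in the span of two locations
`μ + ν'` with `ν' ξ = ν ξ - 1`; descending on `ν ξ`, `B_μ` is spanned by the `n + 1` locations
`μ + ν` with `ν ξ = 0`. These all lie on the `ξ`-line through `μ`, so their sum is direct.
-/

open Module Submodule Function

section LinearAlgebra

variable {F V : Type*} [Field F] [AddCommGroup V] [Module F V] [FiniteDimensional F V]

theorem Submodule.le_of_finrank_eq_one_of_not_disjoint {A D : Submodule F V}
    (hA : finrank F A = 1) (h : ¬Disjoint A D) : A ≤ D := by
  have hpos : 0 < finrank F ↥(A ⊓ D) := by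
    rw [disjoint_iff] at h
    exact Nat.pos_of_ne_zero fun h0 => h (Submodule.finrank_eq_zero.mp h0)
  have : A ⊓ D = A := eq_of_le_of_finrank_le inf_le_left (by omega)
  exact this ▸ inf_le_right

theorem Submodule.finrank_sup_eq_two {A C : Submodule F V} (hA : finrank F A = 1)
    (hC : finrank F C = 1) (h : Disjoint A C) : finrank F ↥(A ⊔ C) = 2 := by
  have := Submodule.finrank_sup_add_finrank_inf_eq A C
  rw [disjoint_iff.mp h, finrank_bot] at this
  omega

theorem Submodule.iSup_eq_sup_of_not_iSupIndep_fin_three {f : Fin 3 → Submodule F V}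
    (hf : ∀ i, finrank F (f i) = 1) (hdisj : Pairwise (Disjoint on f)) (hnot : ¬iSupIndep f)
    {j k : Fin 3} (hjk : j ≠ k) : ⨆ i, f i = f j ⊔ f k := by
  obtain ⟨a, b, hab⟩ : ∃ a b, ⨆ i, f i ≤ f a ⊔ f b := by
    rw [iSup_fin_three]
    simp only [iSupIndep_fin_three, not_and_or] at hnot
    rcases hnot with h | h | h
    · exact ⟨1, 2, sup_le (sup_le (le_of_finrank_eq_one_of_not_disjoint (hf 0) h) le_sup_left)
        le_sup_right⟩
    · exact ⟨2, 0, sup_le (sup_le le_sup_right (le_of_finrank_eq_one_of_not_disjoint (hf 1) h))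
        le_sup_left⟩
    · exact ⟨0, 1, sup_le le_rfl (le_of_finrank_eq_one_of_not_disjoint (hf 2) h)⟩
  have hplane : finrank F ↥(⨆ i, f i) ≤ 2 :=
    (finrank_mono hab).trans ((finrank_add_le_finrank_add_finrank _ _).trans (by rw [hf, hf]))
  refine (eq_of_le_of_finrank_le (sup_le (le_iSup f j) (le_iSup f k)) ?_).symm
  rwa [finrank_sup_eq_two (hf j) (hf k) (hdisj hjk)]

theorem Submodule.finrank_iSup_eq_card_of_iSupIndep {ι : Type*} [Finite ι] {p : ι → Submodule F V}
    (hp : ∀ i, finrank F (p i) = 1) (hind : iSupIndep p) :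
    finrank F ↥(⨆ i, p i) = Nat.card ι := by
  have : Fintype ι := Fintype.ofFinite ι
  have hne : ∀ i, p i ≠ ⊥ := fun i h =>
    one_ne_zero ((hp i).symm.trans (Submodule.finrank_eq_zero.mpr h))
  choose u hu hu0 using fun i => (p i).ne_bot_iff.mp (hne i)
  have hspan : ∀ i, F ∙ u i = p i := fun i =>
    eq_of_le_of_finrank_le ((span_singleton_le_iff_mem _ _).mpr (hu i))
      (by rw [finrank_span_singleton (hu0 i), hp i])
  rw [← iSup_congr hspan, ← span_range_eq_iSup,
    finrank_span_eq_card (hind.linearIndependent _ hu hu0), Nat.card_eq_fintype_card]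

end LinearAlgebra

theorem Fin.sum_univ_three_rotate {M : Type*} [AddCommMonoid M] (w : Fin 3 → M) (ξ : Fin 3) :
    ∑ l, w l = w ξ + w (ξ + 1) + w (ξ + 2) := by
  fin_cases ξ <;> simp [Fin.sum_univ_three] <;> abel

namespace BA

local notation "𝐞" j:max => (Pi.single j 1 : Fin 3 → ℕ)

theorem mem_Delta_iff_sum {N : ℕ} {v : Fin 3 → ℕ} : v ∈ Delta N ↔ ∑ k, v k = N := by
  simp [Delta, Fin.sum_univ_three]

theorem sum_add_single (v : Fin 3 → ℕ) (j : Fin 3) : ∑ k, (v + 𝐞 j) k = ∑ k, v k + 1 := by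
  simp [Finset.sum_add_distrib]

theorem add_mem_Delta {a b : ℕ} {u v : Fin 3 → ℕ} (hu : u ∈ Delta a) (hv : v ∈ Delta b) :
    u + v ∈ Delta (a + b) := by
  rw [mem_Delta_iff_sum] at *
  simp [Finset.sum_add_distrib, hu, hv]

theorem single_mem_Delta (j : Fin 3) (c : ℕ) : Pi.single j c ∈ Delta c := by
  simp [mem_Delta_iff_sum]

theorem apply_le_of_mem_Delta {N : ℕ} {v : Fin 3 → ℕ} (hv : v ∈ Delta N) (η : Fin 3) :
    v η ≤ N :=
  mem_Delta_iff_sum.mp hv ▸ Finset.single_le_sum (fun _ _ => Nat.zero_le _) (Finset.mem_univ η)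

theorem blackSet_eq_range (ρ : Fin 3 → ℕ) :
    blackSet (ρ 0) (ρ 1) (ρ 2) = Set.range fun k => ρ + 𝐞 k := by
  have h0 : ρ + 𝐞 0 = ![ρ 0 + 1, ρ 1, ρ 2] := by ext k; fin_cases k <;> simp
  have h1 : ρ + 𝐞 1 = ![ρ 0, ρ 1 + 1, ρ 2] := by ext k; fin_cases k <;> simp
  have h2 : ρ + 𝐞 2 = ![ρ 0, ρ 1, ρ 2 + 1] := by ext k; fin_cases k <;> simp
  ext w
  simp only [blackSet, Set.mem_range, Fin.exists_fin_succ]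
  simp [h0, h1, h2, eq_comm]

theorem exists_eq_add_single {ν : Fin 3 → ℕ} {ξ : Fin 3} (h : 0 < ν ξ) :
    ∃ ρ, ν = ρ + 𝐞 ξ :=
  ⟨ν - 𝐞 ξ, (tsub_add_cancel_of_le fun k => by
    by_cases hk : k = ξ <;> simp [hk]; omega).symm⟩

def face (n : ℕ) (ξ : Fin 3) : Set (Fin 3 → ℕ) := {w | w ∈ Delta n ∧ w ξ = 0}

theorem card_face (n : ℕ) (ξ : Fin 3) : Nat.card (face n ξ) = n + 1 := by
  have h1 : ξ + 1 ≠ ξ := by revert ξ; decide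
  have h2 : ξ + 2 ≠ ξ := by revert ξ; decide
  have h12 : ξ + 1 ≠ ξ + 2 := by revert ξ; decide
  have hcover : ∀ l, l = ξ ∨ l = ξ + 1 ∨ l = ξ + 2 := by revert ξ; decide
  let enum (i : Fin (n + 1)) : face n ξ :=
    ⟨Pi.single (ξ + 1) i + Pi.single (ξ + 2) (n - i), by
      simpa [Nat.add_sub_cancel' (Nat.lt_succ_iff.mp i.isLt)] using
        add_mem_Delta (single_mem_Delta (ξ + 1) i) (single_mem_Delta (ξ + 2) (n - i)),
      by simp [h1.symm, h2.symm]⟩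
  have hinj : Injective enum := fun a b h => Fin.ext <| by
    simpa [enum, h12] using congrArg (fun w : face n ξ => w.1 (ξ + 1)) h
  have hsurj : Surjective enum := by
    rintro ⟨w, hw, hwξ⟩
    have hsum := Fin.sum_univ_three_rotate w ξ
    rw [mem_Delta_iff_sum.mp hw] at hsum
    refine ⟨⟨w (ξ + 1), by omega⟩, Subtype.ext (funext fun l => ?_)⟩
    rcases hcover l with rfl | rfl | rfl <;> simp [enum, h12, h12.symm, hwξ]
    omega
  simpa using (Nat.card_eq_of_bijective enum ⟨hinj, hsurj⟩).symm

instance (n : ℕ) (ξ : Fin 3) : Finite (face n ξ) :=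
  Nat.finite_of_card_ne_zero (by rw [card_face]; omega)

theorem add_mem_Delta_of_mem_face {N n : ℕ} (hn : n ≤ N) {μ : Fin 3 → ℕ}
    (hμ : μ ∈ Delta (N - n)) {ξ : Fin 3} {ν : Fin 3 → ℕ} (hν : ν ∈ face n ξ) : μ + ν ∈ Delta N :=
  Nat.sub_add_cancel hn ▸ add_mem_Delta hμ hν.1

namespace IsBilliardArray

variable {F V : Type*} [Field F] [AddCommGroup V] [Module F V] {N : ℕ}
  {B : (Fin 3 → ℕ) → Submodule F V}

theorem iSupIndep_line (hB : IsBilliardArray N B) (η : Fin 3) {c : ℕ} (hc : c ≤ N) :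
    iSupIndep fun x : {v ∈ Delta N | v η = c} => B x.1 :=
  hB.2.1 _ ⟨η, c, hc, rfl⟩

theorem disjoint_of_apply_eq (hB : IsBilliardArray N B) {x y : Fin 3 → ℕ} (hx : x ∈ Delta N)
    (hy : y ∈ Delta N) {η : Fin 3} (hxy : x η = y η) (hne : x ≠ y) : Disjoint (B x) (B y) :=
  (hB.iSupIndep_line η (apply_le_of_mem_Delta hx η)).pairwiseDisjoint
    (i := ⟨x, hx, rfl⟩) (j := ⟨y, hy, hxy.symm⟩) fun h => hne (congrArg Subtype.val h)

theorem not_iSupIndep_black (hB : IsBilliardArray N B) {ρ : Fin 3 → ℕ} {M : ℕ}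
    (hρ : ρ ∈ Delta M) (hN : M + 1 = N) : ¬iSupIndep fun k => B (ρ + 𝐞 k) := by
  intro hind
  refine hB.2.2 (ρ 0) (ρ 1) (ρ 2) (by rw [← hN, ← hρ]) ?_
  rw [blackSet_eq_range]
  exact hind.comp' (f := Set.rangeFactorization _) Set.rangeFactorization_surjective

theorem iSupIndep_face (hB : IsBilliardArray N B) {n : ℕ} (hn : n ≤ N) {μ : Fin 3 → ℕ}
    (hμ : μ ∈ Delta (N - n)) (ξ : Fin 3) : iSupIndep fun ν : face n ξ => B (μ + ν) := by
  have hline := hB.iSupIndep_line ξ ((apply_le_of_mem_Delta hμ ξ).trans (Nat.sub_le N n))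
  refine hline.comp (f := fun ν : face n ξ => (⟨μ + ν, add_mem_Delta_of_mem_face hn hμ ν.2, by
    simp [ν.2.2]⟩ : {v ∈ Delta N | v ξ = μ ξ})) fun a b h =>
      Subtype.ext (add_left_cancel (congrArg Subtype.val h))

variable [FiniteDimensional F V]

theorem le_sup_of_black (hB : IsBilliardArray N B) {ρ : Fin 3 → ℕ} {M : ℕ}
    (hρ : ρ ∈ Delta M) (hN : M + 1 = N) (i : Fin 3) {j k : Fin 3} (hjk : j ≠ k) :
    B (ρ + 𝐞 i) ≤ B (ρ + 𝐞 j) ⊔ B (ρ + 𝐞 k) := by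
  have hmem : ∀ l, ρ + 𝐞 l ∈ Delta N := fun l => hN ▸ add_mem_Delta hρ (single_mem_Delta l 1)
  have hdisj : Pairwise (Disjoint on fun l => B (ρ + 𝐞 l)) := by
    intro a b hab
    obtain ⟨c, hca, hcb⟩ : ∃ c, c ≠ a ∧ c ≠ b := by revert a b; decide
    refine hB.disjoint_of_apply_eq (hmem a) (hmem b) (η := c) (by simp [hca, hcb]) fun h => ?_
    simpa [hab] using congrFun h a
  rw [← iSup_eq_sup_of_not_iSupIndep_fin_three (fun l => hB.1 _ (hmem l)) hdisj
    (hB.not_iSupIndep_black hρ hN) hjk]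
  exact le_iSup (fun l => B (ρ + 𝐞 l)) i

theorem le_iSup_face (hB : IsBilliardArray N B) {n : ℕ} (hn : n ≤ N) {μ : Fin 3 → ℕ}
    (hμ : μ ∈ Delta (N - n)) (ξ : Fin 3) {ν : Fin 3 → ℕ} (hν : ν ∈ Delta n) :
    B (μ + ν) ≤ ⨆ ν' ∈ face n ξ, B (μ + ν') := by
  obtain ⟨j, k, hjk, hj, hk⟩ : ∃ j k : Fin 3, j ≠ k ∧ j ≠ ξ ∧ k ≠ ξ := by revert ξ; decide
  obtain ⟨m, hm⟩ : ∃ m, ν ξ = m := ⟨_, rfl⟩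
  induction m generalizing ν with
  | zero => exact le_iSup₂_of_le ν ⟨hν, hm⟩ le_rfl
  | succ m ih =>
    obtain ⟨ρ, rfl⟩ := exists_eq_add_single (hm ▸ m.succ_pos : 0 < ν ξ)
    have hρ : ∑ l, ρ l + 1 = n := by rw [← sum_add_single, ← mem_Delta_iff_sum.mp hν]
    have hmove : ∀ l, l ≠ ξ → B (μ + (ρ + 𝐞 l)) ≤ ⨆ ν' ∈ face n ξ, B (μ + ν') := fun l hl =>
      ih (by rw [mem_Delta_iff_sum, sum_add_single, hρ]) (by simpa [hl.symm] using hm)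
    have hN : ∑ l, (μ + ρ) l + 1 = N := by
      simp only [Pi.add_apply, Finset.sum_add_distrib, mem_Delta_iff_sum.mp hμ]; omega
    calc B (μ + (ρ + 𝐞 ξ)) = B (μ + ρ + 𝐞 ξ) := by rw [add_assoc]
      _ ≤ B (μ + ρ + 𝐞 j) ⊔ B (μ + ρ + 𝐞 k) :=
        hB.le_sup_of_black (mem_Delta_iff_sum.mpr rfl) hN ξ hjk
      _ ≤ _ := by rw [add_assoc, add_assoc]; exact sup_le (hmove j hj) (hmove k hk)

theorem iSup_upper_eq_iSup_face (hB : IsBilliardArray N B) {n : ℕ} (hn : n ≤ N)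
    {μ : Fin 3 → ℕ} (hμ : μ ∈ Delta (N - n)) (ξ : Fin 3) :
    (⨆ v ∈ {w | w ∈ Delta N ∧ ∀ k, μ k ≤ w k}, B v) = ⨆ ν ∈ face n ξ, B (μ + ν) := by
  refine le_antisymm (iSup₂_le fun v ⟨hv, hμv⟩ => ?_) (iSup₂_le fun ν hν => ?_)
  · have hsplit : μ + (v - μ) = v := add_tsub_cancel_of_le hμv
    have hdiff : v - μ ∈ Delta n := by
      have := congrArg (fun w : Fin 3 → ℕ => ∑ k, w k) hsplit
      simp only [Pi.add_apply, Finset.sum_add_distrib, mem_Delta_iff_sum.mp hv,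
        mem_Delta_iff_sum.mp hμ] at this
      exact mem_Delta_iff_sum.mpr (by omega)
    exact hsplit ▸ hB.le_iSup_face hn hμ ξ hdiff
  · exact le_iSup₂_of_le (μ + ν) ⟨add_mem_Delta_of_mem_face hn hμ hν, fun k => le_self_add⟩ le_rfl

end IsBilliardArray

end BA

/-- For a Billiard Array `B` on `V`, `0 ≤ n ≤ N`, and `μ` a triple with
coordinate sum `N - n`, let `B_μ` be the sum of the `B_λ` over locations
`λ ≥ μ` componentwise. Then for each `ξ ∈ {1,2,3}`, `B_μ` equals the (direct)
sum of the subspaces `B_{μ+ν}` over the `ν ∈ Δ_n` with `ξ`-coordinate `0`, and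
`B_μ` has dimension `n + 1`. -/
theorem stmt14 {F V : Type*} [Field F] [AddCommGroup V] [Module F V] (N : ℕ)
    (hV : Module.finrank F V = N + 1) (B : (Fin 3 → ℕ) → Submodule F V)
    (hB : BA.IsBilliardArray N B)
    (n : ℕ) (hn : n ≤ N) (μ : Fin 3 → ℕ) (hμ : μ 0 + μ 1 + μ 2 = N - n) :
    ∀ ξ : Fin 3,
      (⨆ v ∈ {w | w ∈ BA.Delta N ∧ ∀ k, μ k ≤ w k}, B v) =
        (⨆ ν ∈ {w | w ∈ BA.Delta n ∧ w ξ = 0}, B (μ + ν)) ∧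
      (iSupIndep fun ν : {w | w ∈ BA.Delta n ∧ w ξ = 0} => B (μ + ν.1)) ∧
      Module.finrank F
        ↥(⨆ v ∈ {w | w ∈ BA.Delta N ∧ ∀ k, μ k ≤ w k}, B v) = n + 1 := by
  have : FiniteDimensional F V := Module.finite_of_finrank_pos (by omega)
  intro ξ
  have hsup := hB.iSup_upper_eq_iSup_face hn hμ ξ
  have hind := hB.iSupIndep_face hn hμ ξ
  refine ⟨hsup, hind, ?_⟩
  rw [hsup, iSup_subtype', finrank_iSup_eq_card_of_iSupIndep
    (fun ν => hB.1 _ (BA.add_mem_Delta_of_mem_face hn hμ ν.2)) hind, BA.card_face]
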